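/- Let ρ : ℝ → (0,π) be a C¹ 2π-periodic function, let a, b ∈ ℝ, and define the spherical radial graph γ(θ) := (sin ρ(θ) cos θ, sin ρ(θ) sin θ, cos ρ(θ)) on the unit sphere S² ⊂ ℝ³. Suppose that for all θ, ρ'(θ) = (a cos θ + b sin θ) · √( sin²ρ(θ) + ρ'(θ)² ) (i.e. r_s = a cos θ + b sin θ along the curve). Then the image of γ is a geodesic circle: there exist p ∈ ℝ³ with |p| = 1 and R ∈ (0,π) such that ⟨p, γ(θ)⟩ = cos R for all θ. -/

import Mathlib

open Real Set

noncomputable section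

/-!
Write `c = a cos θ + b sin θ`. Solving the equation for `ρ'` forces `c² < 1` for every `θ`, hence
`a² + b² < 1`, and gives `ρ' = (c / s) sin ρ` with `s = √(1 - c²)`. In the half-angle coordinate
`r = tan (ρ / 2)` (stereographic projection from the south pole) this reads `r' = (c / s) r`.
The function `d = a sin θ - b cos θ + s` satisfies the same linear equation, so `r = C d` for a
constant `C > 0`. Squaring out `s` turns this into
`r² - 2 C (a sin θ - b cos θ) r = C² (1 - a² - b²)`, the stereographic image of a circle,
i.e. the trace of a plane on the sphere.
-/

namespace SphericalRadialGraph

def trigComb (a b θ : ℝ) : ℝ := a * cos θ + b * sin θ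

lemma hasDerivAt_trigComb (a b θ : ℝ) : HasDerivAt (trigComb a b) (trigComb b (-a) θ) θ := by
  refine (((hasDerivAt_cos θ).const_mul a).add ((hasDerivAt_sin θ).const_mul b)).congr_deriv ?_
  simp only [trigComb]
  ring

lemma trigComb_sq_add_trigComb_sq (a b θ : ℝ) :
    trigComb a b θ ^ 2 + trigComb (-b) a θ ^ 2 = a ^ 2 + b ^ 2 := by
  simp only [trigComb]
  linear_combination (a ^ 2 + b ^ 2) * sin_sq_add_cos_sq θ

lemma sq_add_sq_lt_one_of_forall_trigComb_sq_lt_one {a b : ℝ}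
    (h : ∀ θ, trigComb a b θ ^ 2 < 1) : a ^ 2 + b ^ 2 < 1 := by
  set z : ℂ := ⟨a, b⟩
  -- at `θ = arg z` the combination attains its maximum `‖z‖`
  have hmax : ‖z‖ * trigComb a b (Complex.arg z) = ‖z‖ ^ 2 := by
    have hre := Complex.norm_mul_cos_arg z
    have him := Complex.norm_mul_sin_arg z
    rw [Complex.sq_norm, Complex.normSq_mk]
    simp only [trigComb]
    linear_combination a * hre + b * him
  have hz : ‖z‖ ^ 2 = a ^ 2 + b ^ 2 := by
    rw [Complex.sq_norm, Complex.normSq_mk]; ring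
  have hlt := h (Complex.arg z)
  nlinarith [sq_nonneg ‖z‖, sq_nonneg (‖z‖ * trigComb a b (Complex.arg z))]

lemma sq_eq_mul_of_eq_mul_sqrt {x y c : ℝ} (h : x = c * √(y ^ 2 + x ^ 2)) :
    x ^ 2 = c ^ 2 * (y ^ 2 + x ^ 2) := by
  conv_lhs => rw [h]
  rw [mul_pow, sq_sqrt (by positivity)]

lemma sq_lt_one_of_eq_mul_sqrt {x y c : ℝ} (hy : y ≠ 0) (h : x = c * √(y ^ 2 + x ^ 2)) :
    c ^ 2 < 1 := by
  have hsq := sq_eq_mul_of_eq_mul_sqrt h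
  by_contra! hc
  nlinarith [sq_pos_of_ne_zero hy, sq_nonneg x]

lemma eq_mul_div_sqrt_of_eq_mul_sqrt {x y c : ℝ} (hy : 0 < y)
    (h : x = c * √(y ^ 2 + x ^ 2)) : x = c * y / √(1 - c ^ 2) := by
  have hc := sq_lt_one_of_eq_mul_sqrt hy.ne' h
  have hs : 0 < √(1 - c ^ 2) := sqrt_pos.2 (by linarith)
  have hnorm : y ^ 2 + x ^ 2 = (y / √(1 - c ^ 2)) ^ 2 := by
    rw [div_pow, sq_sqrt (by linarith), eq_div_iff (by linarith)]
    linear_combination sq_eq_mul_of_eq_mul_sqrt h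
  rw [h, hnorm, sqrt_sq (div_pos hy hs).le, mul_div_assoc]

lemma div_eq_div_of_hasDerivAt_mul_self {f h g : ℝ → ℝ}
    (hf : ∀ x, HasDerivAt f (g x * f x) x) (hh : ∀ x, HasDerivAt h (g x * h x) x)
    (h0 : ∀ x, h x ≠ 0) (x y : ℝ) : f x / h x = f y / h y := by
  have hderiv : ∀ x, HasDerivAt (fun t => f t / h t) 0 x := fun x => by
    refine ((hf x).div (hh x) (h0 x)).congr_deriv ?_
    ring
  exact is_const_of_deriv_eq_zero (fun x => (hderiv x).differentiableAt)
    (fun x => (hderiv x).deriv) x y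

lemma hasDerivAt_tan_half {f : ℝ → ℝ} {g x : ℝ} (hf : HasDerivAt f (g * sin (f x)) x)
    (hx : cos (f x / 2) ≠ 0) :
    HasDerivAt (fun t => tan (f t / 2)) (g * tan (f x / 2)) x := by
  refine ((hasDerivAt_tan hx).comp x (hf.div_const 2)).congr_deriv ?_
  have hsin : sin (f x) = 2 * sin (f x / 2) * cos (f x / 2) := by
    rw [← sin_two_mul]; ring_nf
  rw [tan_eq_sin_div_cos, hsin]
  field_simp

lemma hasDerivAt_trigComb_add_sqrt {a b θ : ℝ} (hc : trigComb a b θ ^ 2 < 1) :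
    HasDerivAt (fun t => trigComb (-b) a t + √(1 - trigComb a b t ^ 2))
      (trigComb a b θ / √(1 - trigComb a b θ ^ 2) *
        (trigComb (-b) a θ + √(1 - trigComb a b θ ^ 2))) θ := by
  have hpos : 0 < 1 - trigComb a b θ ^ 2 := by linarith
  have hs := (((hasDerivAt_trigComb a b θ).fun_pow 2).const_sub 1).sqrt hpos.ne'
  refine ((hasDerivAt_trigComb (-b) a θ).add hs).congr_deriv ?_
  have hm : trigComb b (-a) θ = -trigComb (-b) a θ := by simp only [trigComb]; ring
  have hsne : √(1 - trigComb a b θ ^ 2) ≠ 0 := (sqrt_pos.2 hpos).ne'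
  rw [neg_neg, hm]
  field_simp
  ring

lemma trigComb_sq_lt_one {a b : ℝ} (hk : a ^ 2 + b ^ 2 < 1) (θ : ℝ) :
    trigComb a b θ ^ 2 < 1 := by
  nlinarith [trigComb_sq_add_trigComb_sq a b θ, sq_nonneg (trigComb (-b) a θ)]

lemma trigComb_add_sqrt_pos {a b : ℝ} (hk : a ^ 2 + b ^ 2 < 1) (θ : ℝ) :
    0 < trigComb (-b) a θ + √(1 - trigComb a b θ ^ 2) := by
  have hs : √(1 - trigComb a b θ ^ 2) ^ 2 = 1 - trigComb a b θ ^ 2 :=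
    sq_sqrt (by linarith [trigComb_sq_lt_one hk θ])
  have hm : trigComb (-b) a θ ^ 2 < √(1 - trigComb a b θ ^ 2) ^ 2 := by
    rw [hs]; linarith [trigComb_sq_add_trigComb_sq a b θ]
  have := abs_lt_of_sq_lt_sq hm (sqrt_nonneg _)
  linarith [neg_abs_le (trigComb (-b) a θ)]

lemma exists_tan_half_eq_mul {ρ : ℝ → ℝ} {a b : ℝ} (hρ : ∀ θ, ρ θ ∈ Ioo 0 π)
    (hk : a ^ 2 + b ^ 2 < 1)
    (hρ' : ∀ θ,
      HasDerivAt ρ (trigComb a b θ / √(1 - trigComb a b θ ^ 2) * sin (ρ θ)) θ) :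
    ∃ C > 0, ∀ θ,
      tan (ρ θ / 2) = C * (trigComb (-b) a θ + √(1 - trigComb a b θ ^ 2)) := by
  have hhalf (θ : ℝ) : ρ θ / 2 ∈ Ioo 0 (π / 2) :=
    ⟨by linarith [(hρ θ).1], by linarith [(hρ θ).2]⟩
  have hcos (θ : ℝ) : cos (ρ θ / 2) ≠ 0 :=
    (cos_pos_of_mem_Ioo ⟨by linarith [(hhalf θ).1, pi_pos], (hhalf θ).2⟩).ne'
  refine ⟨_, div_pos (tan_pos_of_pos_of_lt_pi_div_two (hhalf 0).1 (hhalf 0).2)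
    (trigComb_add_sqrt_pos hk 0), fun θ => ?_⟩
  have h := div_eq_div_of_hasDerivAt_mul_self (fun θ => hasDerivAt_tan_half (hρ' θ) (hcos θ))
    (fun θ => hasDerivAt_trigComb_add_sqrt (trigComb_sq_lt_one hk θ))
    (fun θ => (trigComb_add_sqrt_pos hk θ).ne') θ 0
  rwa [div_eq_iff (trigComb_add_sqrt_pos hk θ).ne'] at h

lemma plane_eq_of_tan_half {x v q : ℝ} (hx : cos x ≠ -1)
    (h : tan (x / 2) ^ 2 + 2 * v * tan (x / 2) = q) :
    2 * v * sin x - (1 + q) * cos x = q - 1 := by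
  rw [sin_eq_two_mul_tan_half_div_one_add_tan_half_sq,
    cos_eq_two_mul_tan_half_div_one_sub_tan_half_sq x hx]
  have : 0 < 1 + tan (x / 2) ^ 2 := by positivity
  field_simp
  linear_combination 2 * h

lemma plane_eq_of_tan_half_eq_mul {a b C x θ : ℝ} (hc : trigComb a b θ ^ 2 ≤ 1)
    (hx : cos x ≠ -1)
    (h : tan (x / 2) = C * (trigComb (-b) a θ + √(1 - trigComb a b θ ^ 2))) :
    2 * C * b * (sin x * cos θ) + -(2 * C * a) * (sin x * sin θ) +
      -(1 + C ^ 2 * (1 - (a ^ 2 + b ^ 2))) * cos x = C ^ 2 * (1 - (a ^ 2 + b ^ 2)) - 1 := by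
  have hs : √(1 - trigComb a b θ ^ 2) ^ 2 = 1 - trigComb a b θ ^ 2 := sq_sqrt (by linarith)
  have hcirc : tan (x / 2) ^ 2 + 2 * (-(C * trigComb (-b) a θ)) * tan (x / 2) =
      C ^ 2 * (1 - (a ^ 2 + b ^ 2)) := by
    rw [h]
    linear_combination C ^ 2 * hs - C ^ 2 * trigComb_sq_add_trigComb_sq a b θ
  have := plane_eq_of_tan_half hx hcirc
  simp only [trigComb] at this
  linear_combination this

lemma exists_unit_normal_of_plane {α β γ δ : ℝ} (h : δ ^ 2 < α ^ 2 + β ^ 2 + γ ^ 2) :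
    ∃ p₁ p₂ p₃ R : ℝ, p₁ ^ 2 + p₂ ^ 2 + p₃ ^ 2 = 1 ∧ R ∈ Ioo 0 π ∧
      ∀ x y z, α * x + β * y + γ * z = δ → p₁ * x + p₂ * y + p₃ * z = cos R := by
  set N := √(α ^ 2 + β ^ 2 + γ ^ 2)
  have hN2 : N ^ 2 = α ^ 2 + β ^ 2 + γ ^ 2 := sq_sqrt (by positivity)
  have hN : 0 < N := sqrt_pos.2 (by nlinarith [sq_nonneg δ])
  have hδ : |δ / N| < 1 := by
    rw [abs_div, abs_of_pos hN, div_lt_one hN]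
    exact abs_lt_of_sq_lt_sq (hN2 ▸ h) hN.le
  obtain ⟨hlo, hhi⟩ := abs_lt.1 hδ
  refine ⟨α / N, β / N, γ / N, arccos (δ / N), ?_,
    ⟨arccos_pos.2 hhi, arccos_lt_pi.2 hlo⟩, ?_⟩
  · field_simp
    linarith
  · intro x y z hxyz
    rw [cos_arccos hlo.le hhi.le, ← hxyz]
    ring

end SphericalRadialGraph

open SphericalRadialGraph in
theorem spherical_radial_graph_is_circle_general
    (ρ : ℝ → ℝ) (hρC1 : ContDiff ℝ 1 ρ)
    (hρmem : ∀ θ, ρ θ ∈ Ioo 0 π)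
    (a b : ℝ)
    (hode : ∀ θ : ℝ,
      deriv ρ θ = (a * Real.cos θ + b * Real.sin θ) *
        Real.sqrt ((Real.sin (ρ θ)) ^ 2 + (deriv ρ θ) ^ 2)) :
    ∃ p₁ p₂ p₃ R : ℝ, p₁ ^ 2 + p₂ ^ 2 + p₃ ^ 2 = 1 ∧ R ∈ Ioo 0 π ∧
      ∀ θ : ℝ,
        p₁ * (Real.sin (ρ θ) * Real.cos θ) + p₂ * (Real.sin (ρ θ) * Real.sin θ) +
          p₃ * Real.cos (ρ θ) = Real.cos R := by
  set c := trigComb a b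
  have hsin (θ : ℝ) : 0 < sin (ρ θ) := sin_pos_of_pos_of_lt_pi (hρmem θ).1 (hρmem θ).2
  have hc (θ : ℝ) : c θ ^ 2 < 1 := sq_lt_one_of_eq_mul_sqrt (hsin θ).ne' (hode θ)
  have hk : a ^ 2 + b ^ 2 < 1 := sq_add_sq_lt_one_of_forall_trigComb_sq_lt_one hc
  have hρ' (θ : ℝ) : HasDerivAt ρ (c θ / √(1 - c θ ^ 2) * sin (ρ θ)) θ := by
    have h := ((hρC1.differentiable one_ne_zero) θ).hasDerivAt
    rwa [eq_mul_div_sqrt_of_eq_mul_sqrt (hsin θ) (hode θ), mul_div_right_comm] at h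
  obtain ⟨C, hC, hrC⟩ := exists_tan_half_eq_mul hρmem hk hρ'
  have hcos (θ : ℝ) : cos (ρ θ) ≠ -1 := by
    have h := cos_lt_cos_of_nonneg_of_le_pi (hρmem θ).1.le le_rfl (hρmem θ).2
    rw [cos_pi] at h
    exact h.ne'
  have hq : 0 < C ^ 2 * (1 - (a ^ 2 + b ^ 2)) := mul_pos (pow_pos hC 2) (by linarith)
  obtain ⟨p₁, p₂, p₃, R, hp, hR, hplane⟩ := exists_unit_normal_of_plane
    (by nlinarith [sq_nonneg (C * a), sq_nonneg (C * b)] :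
      (C ^ 2 * (1 - (a ^ 2 + b ^ 2)) - 1) ^ 2 <
        (2 * C * b) ^ 2 + (-(2 * C * a)) ^ 2 + (-(1 + C ^ 2 * (1 - (a ^ 2 + b ^ 2)))) ^ 2)
  exact ⟨p₁, p₂, p₃, R, hp, hR, fun θ =>
    hplane _ _ _ (plane_eq_of_tan_half_eq_mul (hc θ).le (hcos θ) (hrC θ))⟩

/-- A `C¹` spherical radial graph
`γ(θ) = (sin ρ(θ) cos θ, sin ρ(θ) sin θ, cos ρ(θ)) ⊂ S²` satisfying
`r_s = a cos θ + b sin θ`, i.e. `ρ' = (a cos θ + b sin θ) √(sin²ρ + ρ'²)`, is a geodesic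
circle: `⟨p, γ(θ)⟩ = cos R` for some unit `p ∈ ℝ³` and some `R ∈ (0,π)`. -/
theorem spherical_radial_graph_is_circle
    (ρ : ℝ → ℝ) (hρC1 : ContDiff ℝ 1 ρ)
    (hρper : ∀ θ, ρ (θ + 2 * π) = ρ θ)
    (hρmem : ∀ θ, ρ θ ∈ Ioo 0 π)
    (a b : ℝ)
    (hode : ∀ θ : ℝ,
      deriv ρ θ = (a * Real.cos θ + b * Real.sin θ) *
        Real.sqrt ((Real.sin (ρ θ)) ^ 2 + (deriv ρ θ) ^ 2)) :
    ∃ p₁ p₂ p₃ R : ℝ, p₁ ^ 2 + p₂ ^ 2 + p₃ ^ 2 = 1 ∧ R ∈ Ioo 0 π ∧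
      ∀ θ : ℝ,
        p₁ * (Real.sin (ρ θ) * Real.cos θ) + p₂ * (Real.sin (ρ θ) * Real.sin θ) +
          p₃ * Real.cos (ρ θ) = Real.cos R :=
  spherical_radial_graph_is_circle_general ρ hρC1 hρmem a b hode
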